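/- For every natural number n ≥ 2 there exist a complex Hilbert space H and a bounded operator T on H with polar decomposition T = U|T| such that T is n-centered but T is not (n+1)-centered. -/

import Mathlib

/-!
Let `T` be the weighted shift on `ℂ^(n+2) ⊗ ℂ²` whose `2 × 2` matrix weights are `a` on the
first edge, `b` on the `n`-th one and `1` elsewhere, and let `U` be the unweighted shift. Then
`T^k` is the shift by `k` weighted by the products of `k` consecutive weights. For `k ≤ n` no
such window contains both special edges, so all these weights are positive and invertible, and
`T^k = U^k |T^k|` with `|T^k|` block diagonal. For `k = n + 1` the window starting at `0` has
weight `b * a`; a polar decomposition `T^k = V |T^k|` would make `V^* T^k V^* V = P |T^k| P`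
(with `P = V^* V`) self-adjoint, and here that operator has `b * a` as a diagonal block. Choosing
positive `a`, `b` that do not commute makes `b * a` non-self-adjoint.
-/

open ContinuousLinearMap

variable {H : Type*} [NormedAddCommGroup H] [InnerProductSpace ℂ H] [CompleteSpace H]

/-- The absolute value `|T| = (T^*T)^(1/2)` of a bounded operator on a complex
Hilbert space, defined via the continuous functional calculus. -/
noncomputable def absOp (T : H →L[ℂ] H) : H →L[ℂ] H :=
  cfc Real.sqrt (adjoint T * T)

/-- The orthogonal projection of `H` onto the closure of the range of `T`,
regarded as an operator on `H`. -/
noncomputable def rangeProjOp (T : H →L[ℂ] H) : H →L[ℂ] H :=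
  (LinearMap.range (T : H →ₗ[ℂ] H)).topologicalClosure.subtypeL ∘L
    (LinearMap.range (T : H →ₗ[ℂ] H)).topologicalClosure.orthogonalProjectionOnto

/-- `U` is a partial isometry: `U^*U` is an orthogonal projection
(a self-adjoint idempotent). -/
def IsPartialIsometryOp (U : H →L[ℂ] H) : Prop :=
  IsSelfAdjoint (adjoint U * U) ∧ (adjoint U * U) * (adjoint U * U) = adjoint U * U

/-- `T = U|T|` is the polar decomposition of `T`: `U` is a partial isometry and
`U^*U` is the orthogonal projection onto the closure of the range of `T^*`. -/
def IsPolarDecompositionOp (T U : H →L[ℂ] H) : Prop :=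
  T = U * absOp T ∧ IsPartialIsometryOp U ∧ adjoint U * U = rangeProjOp (adjoint T)

/-- `T` (with polar decomposition `T = U|T|`) is `n`-centered: for every
`1 ≤ k ≤ n`, `T^k = U^k |T^k|` is the polar decomposition of `T^k`. -/
def IsNCentered (n : ℕ) (T U : H →L[ℂ] H) : Prop :=
  ∀ k : ℕ, 1 ≤ k → k ≤ n → IsPolarDecompositionOp (T ^ k) (U ^ k)

lemma absOp_nonneg (X : H →L[ℂ] H) : 0 ≤ absOp X :=
  cfc_nonneg fun x _ => Real.sqrt_nonneg x

lemma absOp_eq_of_mul_self {X A : H →L[ℂ] H} (hA : 0 ≤ A) (h : A * A = adjoint X * X) :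
    absOp X = A := by
  have hXX : 0 ≤ adjoint X * X := by simpa [star_eq_adjoint] using star_mul_self_nonneg X
  rw [absOp, ← cfcₙ_eq_cfc, ← CFC.sqrt_eq_real_sqrt _ hXX]
  exact CFC.sqrt_unique h hA

lemma rangeProjOp_eq_of_range_eq {A P : H →L[ℂ] H} (hP : IsStarProjection P)
    (h : (LinearMap.range (A : H →ₗ[ℂ] H)).topologicalClosure =
      LinearMap.range (P : H →ₗ[ℂ] H)) :
    rangeProjOp A = P := by
  obtain ⟨_, hPeq⟩ := isStarProjection_iff_eq_starProjection_range.mp hP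
  rw [hPeq, rangeProjOp]
  exact Submodule.starProjection_inj.mpr h

lemma ContinuousLinearMap.topologicalClosure_range_eq_range_of_isIdempotentElem {R M : Type*}
    [Ring R] [AddCommGroup M] [Module R M] [TopologicalSpace M] [IsTopologicalAddGroup M]
    [ContinuousConstSMul R M] [T1Space M] {A P G : M →L[R] M}
    (hP : IsIdempotentElem P) (hPA : P * A = A) (hAG : A * G = P) :
    (LinearMap.range (A : M →ₗ[R] M)).topologicalClosure =
      LinearMap.range (P : M →ₗ[R] M) := by
  have hle : LinearMap.range (A : M →ₗ[R] M) ≤ LinearMap.range (P : M →ₗ[R] M) := by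
    rw [← hPA]; exact LinearMap.range_comp_le_range _ _
  have hge : LinearMap.range (P : M →ₗ[R] M) ≤ LinearMap.range (A : M →ₗ[R] M) := by
    rw [← hAG]; exact LinearMap.range_comp_le_range _ _
  exact le_antisymm (Submodule.topologicalClosure_minimal _ hle hP.isClosed_range)
    (hge.trans (Submodule.le_topologicalClosure _))

theorem isPolarDecompositionOp_of_eq_mul {T U A G : H →L[ℂ] H} (hA : 0 ≤ A) (hT : T = U * A)
    (hU : IsStarProjection (adjoint U * U)) (hUA : adjoint U * U * A = A)
    (hAG : A * G = adjoint U * U) : IsPolarDecompositionOp T U := by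
  have hAsa : IsSelfAdjoint A := .of_nonneg hA
  have hAU : A * (adjoint U * U) = A := by
    have h := congrArg star hUA
    rwa [star_mul, hU.isSelfAdjoint.star_eq, hAsa.star_eq] at h
  have hTadj : adjoint T = A * adjoint U := by
    rw [hT, ← star_eq_adjoint, star_mul, hAsa.star_eq, star_eq_adjoint]
  have habs : absOp T = A := by
    refine absOp_eq_of_mul_self hA ?_
    rw [hTadj, hT, mul_assoc, ← mul_assoc (adjoint U), hUA]
  refine ⟨habs ▸ hT, ⟨hU.isSelfAdjoint, hU.isIdempotentElem⟩, ?_⟩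
  refine (rangeProjOp_eq_of_range_eq hU ?_).symm
  refine ContinuousLinearMap.topologicalClosure_range_eq_range_of_isIdempotentElem
    (G := U * G) hU.isIdempotentElem ?_ ?_
  · rw [hTadj, ← mul_assoc, hUA]
  · rw [hTadj, mul_assoc, ← mul_assoc (adjoint U), ← mul_assoc, hAU, hAG]

lemma isSelfAdjoint_star_mul_mul_of_eq_mul {R : Type*} [Semigroup R] [StarMul R] {T V A : R}
    (hA : IsSelfAdjoint A) (hT : T = V * A) : IsSelfAdjoint (star V * T * (star V * V)) := by
  subst hT
  have h := hA.conjugate (star V * V)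
  rwa [star_mul, star_star, mul_assoc (star V) V A] at h

lemma IsPolarDecompositionOp.isSelfAdjoint {T U : H →L[ℂ] H} (h : IsPolarDecompositionOp T U) :
    IsSelfAdjoint (adjoint U * T * (adjoint U * U)) :=
  isSelfAdjoint_star_mul_mul_of_eq_mul (.of_nonneg (absOp_nonneg T)) h.1

section Monoid
variable {R : Type*} [Monoid R]

def IsPositiveUnit [Star R] (x : R) : Prop :=
  IsUnit x ∧ ∃ r, star r * r = x

lemma isPositiveUnit_one [StarMul R] : IsPositiveUnit (1 : R) :=
  ⟨isUnit_one, 1, by simp⟩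

lemma IsUnit.isPositiveUnit_star_mul_self [StarMul R] {x : R} (hx : IsUnit x) :
    IsPositiveUnit (star x * x) :=
  ⟨hx.star.mul hx, x, rfl⟩

/-- `windowProd w k i = w (i + k - 1) * ⋯ * w (i + 1) * w i`. -/
def windowProd (w : ℕ → R) : ℕ → ℕ → R
  | 0, _ => 1
  | k + 1, i => windowProd w k (i + 1) * w i

@[simp] lemma windowProd_one (k i : ℕ) : windowProd (1 : ℕ → R) k i = 1 := by
  induction k generalizing i with
  | zero => rfl
  | succ k ih => simp [windowProd, ih]

def bumpWeight (a b : R) (n j : ℕ) : R :=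
  if j = 0 then a else if j = n then b else 1

lemma windowProd_bumpWeight {n : ℕ} (hn : n ≠ 0) (a b : R) (k i : ℕ) :
    windowProd (bumpWeight a b n) k i =
      (if i ≤ n ∧ n < i + k then b else 1) * (if i = 0 ∧ 0 < k then a else 1) := by
  induction k generalizing i with
  | zero => simp [windowProd]
  | succ k ih =>
    rw [windowProd, ih, bumpWeight]
    simp only [Nat.add_eq_zero_iff, one_ne_zero, and_false, false_and, if_false, mul_one]
    split_ifs <;> first | omega | simp

lemma windowProd_bumpWeight_mem {n k : ℕ} (hn : n ≠ 0) (hk : k ≤ n) {p : R → Prop}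
    {a b : R} (h1 : p 1) (ha : p a) (hb : p b) (i : ℕ) :
    p (windowProd (bumpWeight a b n) k i) := by
  rw [windowProd_bumpWeight hn]
  split_ifs <;> first | omega | simpa

end Monoid

namespace Matrix

variable {R : Type*}

def weightedShift [Zero R] (m k : ℕ) (w : ℕ → R) : Matrix (Fin m) (Fin m) R :=
  of fun p q => if (p : ℕ) = q + k then w q else 0

def truncDiagonal [Zero R] (m k : ℕ) (d : ℕ → R) : Matrix (Fin m) (Fin m) R :=
  diagonal fun i => if (i : ℕ) + k < m then d i else 0

section Semiring
variable [Semiring R] {m : ℕ}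

lemma weightedShift_mul_weightedShift (k l : ℕ) (w v : ℕ → R) :
    weightedShift m k w * weightedShift m l v =
      weightedShift m (k + l) fun i => w (i + l) * v i := by
  ext p q
  simp only [weightedShift, mul_apply, of_apply, mul_ite, mul_zero]
  by_cases hq : (q : ℕ) + l < m
  · rw [Fintype.sum_eq_single ⟨q + l, hq⟩ fun j hj => if_neg fun h => hj (Fin.ext h)]
    simp only [if_true]
    split_ifs <;> first | omega | rfl | simp
  · rw [if_neg (by omega), Finset.sum_eq_zero fun j _ => if_neg (by omega)]

lemma weightedShift_zero (d : ℕ → R) : weightedShift m 0 d = diagonal fun i : Fin m => d i := by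
  ext p q
  simp only [weightedShift, diagonal_apply, of_apply, add_zero, Fin.ext_iff]
  split_ifs with h <;> simp [h]

lemma weightedShift_one_pow (w : ℕ → R) (k : ℕ) :
    weightedShift m 1 w ^ k = weightedShift m k (windowProd w k) := by
  induction k with
  | zero =>
    rw [pow_zero, weightedShift_zero, ← diagonal_one]
    rfl
  | succ k ih => rw [pow_succ, ih, weightedShift_mul_weightedShift]; rfl

lemma weightedShift_mul_truncDiagonal (k : ℕ) (w d : ℕ → R) :
    weightedShift m k w * truncDiagonal m k d = weightedShift m k fun i => w i * d i := by
  ext p q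
  simp only [weightedShift, truncDiagonal, mul_diagonal, of_apply]
  split_ifs <;> first | omega | simp

lemma truncDiagonal_mul_truncDiagonal (k : ℕ) (d e : ℕ → R) :
    truncDiagonal m k d * truncDiagonal m k e = truncDiagonal m k fun i => d i * e i := by
  simp only [truncDiagonal, diagonal_mul_diagonal, ite_mul, zero_mul, mul_ite, mul_zero]
  congr 1; ext i; split_ifs <;> rfl

end Semiring

section StarRing
variable [Semiring R] [StarRing R] {m : ℕ}

lemma conjTranspose_weightedShift_mul_weightedShift (k : ℕ) (v w : ℕ → R) :
    (weightedShift m k v)ᴴ * weightedShift m k w =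
      truncDiagonal m k fun i => star (v i) * w i := by
  ext p q
  simp only [weightedShift, truncDiagonal, mul_apply, conjTranspose_apply, of_apply,
    diagonal_apply]
  by_cases hp : (p : ℕ) + k < m
  · rw [Fintype.sum_eq_single ⟨p + k, hp⟩ fun j hj => by
      rw [if_neg fun h => hj (Fin.ext h), star_zero, zero_mul]]
    rcases eq_or_ne p q with rfl | hpq
    · simp [hp]
    · simp [hpq, Fin.val_ne_of_ne hpq]
  · rw [if_neg hp, Finset.sum_eq_zero fun j _ => by
      rw [if_neg (by have := j.isLt; omega), star_zero, zero_mul]]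
    simp

lemma conjTranspose_truncDiagonal (k : ℕ) (d : ℕ → R) :
    (truncDiagonal m k d)ᴴ = truncDiagonal m k fun i => star (d i) := by
  simp only [truncDiagonal, diagonal_conjTranspose]
  congr 1; ext i; simp only [Pi.star_apply]; split_ifs <;> simp

lemma isSelfAdjoint_truncDiagonal_iff {k : ℕ} {d : ℕ → R} :
    IsSelfAdjoint (truncDiagonal m k d) ↔
      ∀ i : Fin m, (i : ℕ) + k < m → IsSelfAdjoint (d i) := by
  rw [IsSelfAdjoint, star_eq_conjTranspose, conjTranspose_truncDiagonal, truncDiagonal,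
    truncDiagonal, diagonal_eq_diagonal_iff]
  refine forall_congr' fun i => ?_
  split_ifs with hi <;> simp [hi, IsSelfAdjoint]

end StarRing

end Matrix

section BlockShift
open Matrix
variable {ι : Type*} [Fintype ι] [DecidableEq ι] {m : ℕ}

noncomputable def blockMatrixToCLM (m : ℕ) (ι : Type*) [Fintype ι] [DecidableEq ι] :
    Matrix (Fin m) (Fin m) (Matrix ι ι ℂ) ≃⋆ₐ[ℂ]
      (EuclideanSpace ℂ (Fin m × ι) →L[ℂ] EuclideanSpace ℂ (Fin m × ι)) :=
  (StarAlgEquiv.ofAlgEquiv (compAlgEquiv (Fin m) ι ℂ ℂ) fun _ => by ext; rfl).trans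
    toEuclideanCLM

local notation "Φ" => blockMatrixToCLM m ι

lemma adjoint_blockMatrixToCLM (X : Matrix (Fin m) (Fin m) (Matrix ι ι ℂ)) :
    adjoint (Φ X) = Φ Xᴴ := by
  rw [← star_eq_adjoint, ← map_star]; rfl

theorem isPolarDecompositionOp_blockShift_pow {w : ℕ → Matrix ι ι ℂ} {k : ℕ}
    (hw : ∀ i, IsPositiveUnit (windowProd w k i)) :
    IsPolarDecompositionOp (Φ (weightedShift m 1 w) ^ k) (Φ (weightedShift m 1 1) ^ k) := by
  choose hunit r hr using hw
  set W := windowProd w k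
  have hU : adjoint (Φ (weightedShift m 1 1) ^ k) * Φ (weightedShift m 1 1) ^ k =
      Φ (truncDiagonal m k fun _ => 1) := by
    rw [← map_pow, weightedShift_one_pow, adjoint_blockMatrixToCLM, ← map_mul,
      conjTranspose_weightedShift_mul_weightedShift]
    simp
  have hP : IsStarProjection (truncDiagonal m k fun _ => (1 : Matrix ι ι ℂ)) := by
    refine ⟨?_, isSelfAdjoint_truncDiagonal_iff.mpr fun _ _ => .one _⟩
    rw [IsIdempotentElem, truncDiagonal_mul_truncDiagonal, mul_one]
  refine isPolarDecompositionOp_of_eq_mul (A := Φ (truncDiagonal m k W))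
    (G := Φ (truncDiagonal m k fun i => Ring.inverse (W i))) ?_ ?_ (hU ▸ hP.map Φ) ?_ ?_
  · have hA : truncDiagonal m k W = star (truncDiagonal m k r) * truncDiagonal m k r := by
      rw [star_eq_conjTranspose, conjTranspose_truncDiagonal, truncDiagonal_mul_truncDiagonal]
      simp_rw [hr]
    rw [hA, map_mul, map_star]
    exact star_mul_self_nonneg _
  · rw [← map_pow, ← map_pow, weightedShift_one_pow, weightedShift_one_pow, ← map_mul,
      weightedShift_mul_truncDiagonal]
    simp [W]
  · rw [hU, ← map_mul, truncDiagonal_mul_truncDiagonal]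
    simp
  · rw [hU, ← map_mul, truncDiagonal_mul_truncDiagonal]
    simp_rw [Ring.mul_inverse_cancel _ (hunit _)]

theorem not_isPolarDecompositionOp_blockShift_pow {w : ℕ → Matrix ι ι ℂ} {k : ℕ}
    (hk : k < m) (hw : ¬ IsSelfAdjoint (windowProd w k 0)) :
    ¬ IsPolarDecompositionOp (Φ (weightedShift m 1 w) ^ k) (Φ (weightedShift m 1 1) ^ k) := by
  intro h
  have hsa := h.isSelfAdjoint
  rw [← map_pow, ← map_pow, weightedShift_one_pow, weightedShift_one_pow,
    adjoint_blockMatrixToCLM, ← map_mul, ← map_mul, ← map_mul,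
    conjTranspose_weightedShift_mul_weightedShift, conjTranspose_weightedShift_mul_weightedShift,
    truncDiagonal_mul_truncDiagonal] at hsa
  have hdiag := hsa.map (blockMatrixToCLM m ι).symm
  rw [StarAlgEquiv.symm_apply_apply, isSelfAdjoint_truncDiagonal_iff] at hdiag
  exact hw (by simpa using hdiag ⟨0, by omega⟩ (by simpa))

end BlockShift

lemma exists_isPositiveUnit_not_isSelfAdjoint_mul :
    ∃ a b : Matrix (Fin 2) (Fin 2) ℂ,
      IsPositiveUnit a ∧ IsPositiveUnit b ∧ ¬ IsSelfAdjoint (b * a) := by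
  have hunit : ∀ x : Matrix (Fin 2) (Fin 2) ℂ, x.det ≠ 0 → IsUnit x := fun x hx =>
    (Matrix.isUnit_iff_isUnit_det x).mpr hx.isUnit
  refine ⟨star !![1, 1; 0, 1] * !![1, 1; 0, 1], star !![1, 0; 0, 2] * !![1, 0; 0, 2],
    (hunit _ (by simp [Matrix.det_fin_two_of])).isPositiveUnit_star_mul_self,
    (hunit _ (by simp [Matrix.det_fin_two_of])).isPositiveUnit_star_mul_self, fun h => ?_⟩
  have h01 := congrFun (congrFun h 0) 1
  norm_num [Matrix.mul_apply, Fin.sum_univ_two, Matrix.star_eq_conjTranspose] at h01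

/-- For every `n ≥ 2` there is a Hilbert space operator that is `n`-centered
but not `(n+1)`-centered. -/
theorem exists_isNCentered_not_succ_centered (n : ℕ) (hn : 2 ≤ n) :
    ∃ (H : Type) (_ : NormedAddCommGroup H) (_ : InnerProductSpace ℂ H)
      (_ : CompleteSpace H) (T U : H →L[ℂ] H),
      IsPolarDecompositionOp T U ∧ IsNCentered n T U ∧
        ¬ IsNCentered (n + 1) T U := by
  obtain ⟨a, b, ha, hb, hba⟩ := exists_isPositiveUnit_not_isSelfAdjoint_mul
  have hn0 : n ≠ 0 := by omega
  set Φ := blockMatrixToCLM (n + 2) (Fin 2)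
  set T := Φ (Matrix.weightedShift (n + 2) 1 (bumpWeight a b n))
  set U := Φ (Matrix.weightedShift (n + 2) 1 1)
  have hcent : ∀ k ≤ n, IsPolarDecompositionOp (T ^ k) (U ^ k) := fun k hk =>
    isPolarDecompositionOp_blockShift_pow
      (windowProd_bumpWeight_mem hn0 hk isPositiveUnit_one ha hb)
  refine ⟨_, inferInstance, inferInstance, inferInstance, T, U, by simpa using hcent 1 (by omega),
    fun k _ hk => hcent k hk, fun h => ?_⟩
  refine not_isPolarDecompositionOp_blockShift_pow (by omega) ?_ (h (n + 1) (by omega) le_rfl)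
  simpa [windowProd_bumpWeight hn0] using hba
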